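/- Under random-vector quantization with tail probability Pr(ε ≥ τ | B) = (1 - τ^(L-1))^(2^B) for τ ∈ [0,1], the expectation of ε equals 2^B · Beta(2^B, L/(L-1)), where Beta denotes the Beta function. -/

import Mathlib

open intervalIntegral Set

/-- The real Beta function `Beta(x,y) = ∫₀¹ t^(x-1) (1-t)^(y-1) dt`. -/
noncomputable def realBeta (x y : ℝ) : ℝ :=
  ∫ t in (0:ℝ)..1, t ^ (x - 1) * (1 - t) ^ (y - 1)

/-- Under random-vector quantization with tail probability
`Pr(ε ≥ τ | B) = (1 - τ^(L-1))^(2^B)`, the expectation of `ε`, computed as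
`∫₀¹ Pr(ε ≥ τ) dτ`, equals `2^B · Beta(2^B, L/(L-1))`. -/
theorem stmt_3 (L : ℕ) (hL : 2 ≤ L) (B : ℕ) :
    (∫ τ in (0:ℝ)..1, (1 - τ ^ (L - 1)) ^ ((2 : ℝ) ^ B)) =
      (2 : ℝ) ^ B * realBeta ((2 : ℝ) ^ B) ((L : ℝ) / ((L : ℝ) - 1)) := by
  set m : ℕ := L - 1 with hm
  have hm1 : 1 ≤ m := by omega
  set c : ℝ := (2:ℝ)^B with hc
  have hc1 : (1:ℝ) ≤ c := one_le_pow₀ (by norm_num)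
  have hc0 : (0:ℝ) < c := lt_of_lt_of_le one_pos hc1
  set M : ℝ := (L:ℝ) - 1 with hMdef
  have hM : (m:ℝ) = M := by
    rw [hm, hMdef]; push_cast [Nat.cast_sub (by omega : 1 ≤ L)]; ring
  have hM1 : (1:ℝ) ≤ M := by
    rw [← hM]; exact_mod_cast hm1
  have hM0 : (0:ℝ) < M := lt_of_lt_of_le one_pos hM1
  -- continuity facts
  have cont1 : Continuous (fun τ : ℝ => (1 - τ ^ m) ^ c) := by
    exact (continuous_const.sub (continuous_pow m)).rpow_const
      (fun x => Or.inr (by linarith))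
  have cont2 : Continuous (fun τ : ℝ => (1 - τ ^ m) ^ (c - 1)) := by
    exact (continuous_const.sub (continuous_pow m)).rpow_const
      (fun x => Or.inr (by linarith))
  have cont3 : Continuous (fun τ : ℝ => (m:ℝ) * τ ^ m * (1 - τ ^ m) ^ (c - 1)) :=
    (continuous_const.mul (continuous_pow m)).mul cont2
  -- Step C : integration by parts / FTC
  have hderiv : ∀ τ ∈ uIcc (0:ℝ) 1,
      HasDerivAt (fun x : ℝ => x * (1 - x ^ m) ^ c)
        ((1 - τ ^ m) ^ c - c * ((m:ℝ) * τ ^ m * (1 - τ ^ m) ^ (c - 1))) τ := by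
    intro τ _
    have h1 : HasDerivAt (fun x : ℝ => 1 - x ^ m) (-((m:ℝ) * τ ^ (m - 1))) τ := by
      simpa using (hasDerivAt_pow m τ).const_sub 1
    have h2 : HasDerivAt (fun x : ℝ => (1 - x ^ m) ^ c)
        (-((m:ℝ) * τ ^ (m - 1)) * c * (1 - τ ^ m) ^ (c - 1)) τ :=
      h1.rpow_const (Or.inr hc1)
    have h3 : HasDerivAt (fun x : ℝ => id x * (1 - x ^ m) ^ c) (1 * (1 - τ ^ m) ^ c + τ * (-((m:ℝ) * τ ^ (m - 1)) * c * (1 - τ ^ m) ^ (c - 1))) τ := (hasDerivAt_id τ).mul h2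
    have hτ : τ * τ ^ (m - 1) = τ ^ m := by
      rw [← pow_succ']; congr 1; omega
    convert h3 using 1
    simp only [id_eq, one_mul]
    rw [show τ * (-((m:ℝ) * τ ^ (m - 1)) * c * (1 - τ ^ m) ^ (c - 1))
        = -((m:ℝ) * (τ * τ ^ (m - 1)) * c * (1 - τ ^ m) ^ (c - 1)) by ring, hτ]
    ring
  have hFTC := intervalIntegral.integral_eq_sub_of_hasDerivAt hderiv
    ((cont1.sub (continuous_const.mul cont3)).intervalIntegrable 0 1)
  have hend : (fun x : ℝ => x * (1 - x ^ m) ^ c) 1 - (fun x : ℝ => x * (1 - x ^ m) ^ c) 0 = 0 := by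
    simp [Real.zero_rpow (ne_of_gt hc0)]
  rw [hend] at hFTC
  have hsplit : (∫ τ in (0:ℝ)..1, (1 - τ ^ m) ^ c)
      = c * ∫ τ in (0:ℝ)..1, (m:ℝ) * τ ^ m * (1 - τ ^ m) ^ (c - 1) := by
    have := intervalIntegral.integral_sub (μ := MeasureTheory.volume)
      (f := fun τ : ℝ => (1 - τ ^ m) ^ c)
      (g := fun τ : ℝ => c * ((m:ℝ) * τ ^ m * (1 - τ ^ m) ^ (c - 1)))
      (a := 0) (b := 1)
      (cont1.intervalIntegrable 0 1)
      ((continuous_const.mul cont3).intervalIntegrable 0 1)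
    rw [hFTC] at this
    rw [intervalIntegral.integral_const_mul] at this
    linarith [this]
  -- Step B : substitution t = 1 - τ^m
  have contg : Continuous (fun t : ℝ => t ^ (c - 1) * (1 - t) ^ (M⁻¹)) := by
    refine Continuous.mul ?_ ?_
    · exact continuous_id.rpow_const (fun x => Or.inr (by linarith))
    · exact (continuous_const.sub continuous_id).rpow_const
        (fun x => Or.inr (by positivity))
  have hsub : (∫ t in (0:ℝ)..1, t ^ (c - 1) * (1 - t) ^ (M⁻¹))
      = ∫ τ in (0:ℝ)..1, (m:ℝ) * τ ^ m * (1 - τ ^ m) ^ (c - 1) := by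
    have hf : ∀ x ∈ uIcc (0:ℝ) 1, HasDerivAt (fun x : ℝ => 1 - x ^ m)
        (-((m:ℝ) * x ^ (m - 1))) x := by
      intro x _; simpa using (hasDerivAt_pow m x).const_sub 1
    have hf' : ContinuousOn (fun x : ℝ => -((m:ℝ) * x ^ (m - 1))) (uIcc (0:ℝ) 1) :=
      ((continuous_const.mul (continuous_pow (m-1))).neg).continuousOn
    have key := intervalIntegral.integral_comp_smul_deriv hf hf' contg
    simp only [Function.comp] at key
    rw [show (1:ℝ) - (1:ℝ) ^ m = 0 by simp, show (1:ℝ) - (0:ℝ) ^ m = 1 by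
      simp [zero_pow (by omega : m ≠ 0)]] at key
    have key2 : (∫ t in (0:ℝ)..1, t ^ (c - 1) * (1 - t) ^ (M⁻¹))
        = ∫ x in (0:ℝ)..1, -(-((m:ℝ) * x ^ (m - 1)) •
            ((1 - x ^ m) ^ (c - 1) * (1 - (1 - x ^ m)) ^ M⁻¹)) := by
      rw [intervalIntegral.integral_neg, key, intervalIntegral.integral_symm 0 1, neg_neg]
    rw [key2]
    apply intervalIntegral.integral_congr
    intro τ hτ
    rw [uIcc_of_le (by norm_num : (0:ℝ) ≤ 1)] at hτ
    obtain ⟨hτ0, hτ1⟩ := hτ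
    have hpow : ((1:ℝ) - (1 - τ ^ m)) ^ (M⁻¹) = τ := by
      have : (1:ℝ) - (1 - τ ^ m) = τ ^ m := by ring
      rw [this, ← Real.rpow_natCast τ m, ← Real.rpow_mul hτ0, hM,
        mul_inv_cancel₀ (ne_of_gt hM0), Real.rpow_one]
    have hτm : τ ^ (m - 1) * τ = τ ^ m := by
      rw [← pow_succ]; congr 1; omega
    simp only [smul_eq_mul]
    rw [hpow]
    rw [show -(-((m:ℝ) * τ ^ (m - 1)) * ((1 - τ ^ m) ^ (c - 1) * τ))
        = (m:ℝ) * (τ ^ (m - 1) * τ) * (1 - τ ^ m) ^ (c - 1) by ring, hτm]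
  -- Step A : rewrite realBeta
  have hA : realBeta c ((L:ℝ) / ((L:ℝ) - 1))
      = ∫ t in (0:ℝ)..1, t ^ (c - 1) * (1 - t) ^ (M⁻¹) := by
    unfold realBeta
    apply intervalIntegral.integral_congr
    intro t _
    dsimp only
    rw [hMdef]
    field_simp
    have hL1 : (L:ℝ) - 1 ≠ 0 := by rw [← hMdef]; exact ne_of_gt hM0
    rw [div_sub_one hL1]; ring_nf
  rw [hA, hsub, hsplit]
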